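/- arXiv:math/0410344 — 2 statements merged into one kernel-verified Lean document; each statement's English description precedes it below -/
import Mathlib

section
/- For any bounded open set A ⊂ ℝ^N, letting B be the open ball centered at the origin with the same Lebesgue measure as A, one has ∫_B |x|^N dx ≤ ∫_A |x|^N dx, with equality if and only if A and B agree up to a null set. -/
/-!
Bathtub principle: `B = ball 0 R` is the sublevel set `{‖x‖ ^ N < c}` of the weight, and
`vol (A \ B) = vol (B \ A)`. The weight is `≥ c` on `A \ B` and `< c` on `B \ A`, so
`∫_A - ∫_B = ∫_{A \ B} - ∫_{B \ A} ≥ c · vol (A \ B) - c · vol (B \ A) = 0`,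
and the second inequality is strict unless `B \ A`, hence also `A \ B`, is null.
-/

open MeasureTheory Metric Set

section Bathtub

variable {α : Type*} [MeasurableSpace α] {μ : Measure α} {f : α → ℝ} {s A B : Set α}
  {c : ℝ}

theorem setIntegral_lt_const_mul_measureReal (hs : MeasurableSet s) (hμs : μ s ≠ ⊤)
    (hμs₀ : μ s ≠ 0) (hfi : IntegrableOn f s μ) (hf : ∀ x ∈ s, f x < c) :
    ∫ x in s, f x ∂μ < c * μ.real s := by
  have hci : IntegrableOn (fun _ => c) s μ := integrableOn_const hμs
  have hsupport : (Function.support fun x => c - f x) ∩ s = s :=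
    inter_eq_right.2 fun x hx => sub_ne_zero.2 (hf x hx).ne'
  have hpos : 0 < ∫ x in s, (c - f x) ∂μ := by
    rw [setIntegral_pos_iff_support_of_nonneg_ae
      ((ae_restrict_iff' hs).2 (ae_of_all _ fun x hx => (sub_pos.2 (hf x hx)).le))
      (hci.sub hfi), hsupport]
    exact pos_iff_ne_zero.2 hμs₀
  rw [integral_sub hci hfi, setIntegral_const, smul_eq_mul, mul_comm] at hpos
  linarith

theorem setIntegral_le_const_mul_measureReal (hs : MeasurableSet s) (hμs : μ s ≠ ⊤)
    (hfi : IntegrableOn f s μ) (hf : ∀ x ∈ s, f x < c) :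
    ∫ x in s, f x ∂μ ≤ c * μ.real s := by
  rcases eq_or_ne (μ s) 0 with hμs₀ | hμs₀
  · simp [Measure.restrict_eq_zero.2 hμs₀, measureReal_def, hμs₀]
  · exact (setIntegral_lt_const_mul_measureReal hs hμs hμs₀ hfi hf).le

theorem setIntegral_sub_setIntegral_eq_sdiff (hA : MeasurableSet A) (hB : MeasurableSet B)
    (hfA : IntegrableOn f A μ) (hfB : IntegrableOn f B μ) :
    ∫ x in A, f x ∂μ - ∫ x in B, f x ∂μ =
      ∫ x in A \ B, f x ∂μ - ∫ x in B \ A, f x ∂μ := by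
  rw [← integral_inter_add_sdiff hB hfA, ← integral_inter_add_sdiff hA hfB, inter_comm]
  ring

theorem const_mul_measureReal_sdiff_setOf_lt_le (hf : Measurable f) (hA : MeasurableSet A)
    (hvol : μ {x | f x < c} = μ A) (hμA : μ A ≠ ⊤) (hfA : IntegrableOn f A μ) :
    c * μ.real ({x | f x < c} \ A) ≤ ∫ x in A \ {x | f x < c}, f x ∂μ := by
  have hB : MeasurableSet {x | f x < c} := measurableSet_lt hf measurable_const
  have hsymm : μ ({x | f x < c} \ A) = μ (A \ {x | f x < c}) :=
    measure_sdiff_symm hB.nullMeasurableSet hA.nullMeasurableSet hvol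
      (measure_ne_top_of_subset inter_subset_right hμA)
  rw [measureReal_def, hsymm, ← measureReal_def]
  exact setIntegral_ge_of_const_le_real (hA.diff hB) (measure_ne_top_of_subset sdiff_subset hμA)
    (fun x hx => not_lt.1 hx.2) (hfA.mono_set sdiff_subset)

theorem setIntegral_setOf_lt_le (hf : Measurable f) (hA : MeasurableSet A)
    (hvol : μ {x | f x < c} = μ A) (hμA : μ A ≠ ⊤) (hfA : IntegrableOn f A μ)
    (hfB : IntegrableOn f {x | f x < c} μ) :
    ∫ x in {x | f x < c}, f x ∂μ ≤ ∫ x in A, f x ∂μ := by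
  have hB : MeasurableSet {x | f x < c} := measurableSet_lt hf measurable_const
  have hBA : ∫ x in {x | f x < c} \ A, f x ∂μ ≤ c * μ.real ({x | f x < c} \ A) :=
    setIntegral_le_const_mul_measureReal (hB.diff hA)
      (measure_ne_top_of_subset sdiff_subset (hvol ▸ hμA)) (hfB.mono_set sdiff_subset)
      fun x hx => hx.1
  have hdiff := setIntegral_sub_setIntegral_eq_sdiff hA hB hfA hfB
  linarith [const_mul_measureReal_sdiff_setOf_lt_le hf hA hvol hμA hfA]

theorem setIntegral_setOf_lt_eq_iff (hf : Measurable f) (hA : MeasurableSet A)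
    (hvol : μ {x | f x < c} = μ A) (hμA : μ A ≠ ⊤) (hfA : IntegrableOn f A μ)
    (hfB : IntegrableOn f {x | f x < c} μ) :
    ∫ x in {x | f x < c}, f x ∂μ = ∫ x in A, f x ∂μ ↔
      μ (symmDiff A {x | f x < c}) = 0 := by
  have hB : MeasurableSet {x | f x < c} := measurableSet_lt hf measurable_const
  refine ⟨fun hint => ?_, fun hnull =>
    setIntegral_congr_set (measure_symmDiff_eq_zero_iff.1 hnull).symm⟩
  have hBA : μ ({x | f x < c} \ A) = 0 := by
    by_contra hBA
    have hlt := setIntegral_lt_const_mul_measureReal (hB.diff hA)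
      (measure_ne_top_of_subset sdiff_subset (hvol ▸ hμA)) hBA (hfB.mono_set sdiff_subset)
      fun x hx => hx.1
    have hdiff := setIntegral_sub_setIntegral_eq_sdiff hA hB hfA hfB
    linarith [const_mul_measureReal_sdiff_setOf_lt_le hf hA hvol hμA hfA]
  have hAB : μ (A \ {x | f x < c}) = 0 := by
    rw [← measure_sdiff_symm hB.nullMeasurableSet hA.nullMeasurableSet hvol
      (measure_ne_top_of_subset inter_subset_right hμA), hBA]
  exact measure_union_null hAB hBA

end Bathtub

theorem exists_ball_zero_eq_setOf_norm_pow_lt (N : ℕ) (R : ℝ) :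
    ∃ c, ball (0 : EuclideanSpace ℝ (Fin N)) R = {x | ‖x‖ ^ N < c} := by
  rcases N.eq_zero_or_pos with rfl | hN
  · -- The space is a point and the weight is the constant `1`.
    refine ⟨if 0 < R then 2 else 1, ?_⟩
    ext x
    rw [Subsingleton.elim x 0]
    split_ifs with hR <;> simp [hR]
  · refine ⟨max R 0 ^ N, ?_⟩
    ext x
    rw [mem_ball_zero_iff, mem_ofPred_eq,
      pow_lt_pow_iff_left₀ (norm_nonneg x) (le_max_right R 0) hN.ne', lt_max_iff]
    simp [(norm_nonneg x).not_gt]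

theorem ball_minimizes_Nth_moment_general {N : ℕ}
    (A : Set (EuclideanSpace ℝ (Fin N))) (hA : IsOpen A) (hAbdd : Bornology.IsBounded A)
    (R : ℝ)
    (hvol : volume (ball (0 : EuclideanSpace ℝ (Fin N)) R) = volume A) :
    (∫ x in ball (0 : EuclideanSpace ℝ (Fin N)) R, ‖x‖ ^ N)
      ≤ (∫ x in A, ‖x‖ ^ N) ∧
    ((∫ x in ball (0 : EuclideanSpace ℝ (Fin N)) R, ‖x‖ ^ N) = (∫ x in A, ‖x‖ ^ N) ↔
      volume (symmDiff A (ball (0 : EuclideanSpace ℝ (Fin N)) R)) = 0) := by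
  have hf : Continuous fun x : EuclideanSpace ℝ (Fin N) => ‖x‖ ^ N := by fun_prop
  have hfi : ∀ s : Set (EuclideanSpace ℝ (Fin N)), Bornology.IsBounded s →
      IntegrableOn (fun x => ‖x‖ ^ N) s := fun s hs =>
    (hf.continuousOn.integrableOn_compact hs.isCompact_closure).mono_set subset_closure
  have hfB := hfi _ (isBounded_ball (x := (0 : EuclideanSpace ℝ (Fin N))) (r := R))
  obtain ⟨c, hc⟩ := exists_ball_zero_eq_setOf_norm_pow_lt N R
  rw [hc] at hvol hfB ⊢
  have hμA : volume A ≠ ⊤ := hAbdd.measure_lt_top.ne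
  exact ⟨setIntegral_setOf_lt_le hf.measurable hA.measurableSet hvol hμA (hfi A hAbdd) hfB,
    setIntegral_setOf_lt_eq_iff hf.measurable hA.measurableSet hvol hμA (hfi A hAbdd) hfB⟩

theorem ball_minimizes_Nth_moment {N : ℕ}
    (A : Set (EuclideanSpace ℝ (Fin N))) (hA : IsOpen A) (hAbdd : Bornology.IsBounded A)
    (R : ℝ) (hR : 0 ≤ R)
    (hvol : volume (ball (0 : EuclideanSpace ℝ (Fin N)) R) = volume A) :
    (∫ x in ball (0 : EuclideanSpace ℝ (Fin N)) R, ‖x‖ ^ N)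
      ≤ (∫ x in A, ‖x‖ ^ N) ∧
    ((∫ x in ball (0 : EuclideanSpace ℝ (Fin N)) R, ‖x‖ ^ N) = (∫ x in A, ‖x‖ ^ N) ↔
      volume (symmDiff A (ball (0 : EuclideanSpace ℝ (Fin N)) R)) = 0) :=
  ball_minimizes_Nth_moment_general A hA hAbdd R hvol
end

section
/- Let h : [0,∞) → ℝ be integrable with ∫_0^∞ s|h(s)| ds < ∞, and suppose: (a) ∫_0^r h(s) ds ≥ 0 for all r > 0; (b) ∫_0^∞ h(s) ds = 0; (c) ∫_0^∞ s h(s) ds ≥ 0. Then ∫_0^∞ s h(s) ds = 0 and ∫_0^r h(s) ds = 0 for all r ≥ 0. -/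
/-!
Put `H r = ∫₀ʳ h`. By (b), `H t = -∫ₜ^∞ h` for `t > 0`, and Fubini on the region `0 < t < s`
(legitimate because `∫ s |h s| < ∞`) turns `∫₀^∞ ∫ₜ^∞ h(s) ds dt` into `∫₀^∞ s h(s) ds`.
Hence `∫₀^∞ H = -∫₀^∞ s h(s) ds ≤ 0` by (c), while `H ≥ 0` by (a). So `∫₀^∞ H = 0`, which gives
the first claim, and the continuous nonnegative integrable function `H` vanishes on `(0, ∞)`.
-/

open MeasureTheory intervalIntegral Set

section TailIntegral

variable {f : ℝ → ℝ}

noncomputable def tailKernel (f : ℝ → ℝ) : ℝ × ℝ → ℝ :=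
  {p : ℝ × ℝ | 0 < p.1 ∧ p.1 < p.2}.indicator fun p => f p.2

lemma tailKernel_apply_of_pos {t : ℝ} (ht : 0 < t) (s : ℝ) :
    tailKernel f (t, s) = (Ioi t).indicator f s := by
  by_cases hs : t < s <;> simp [tailKernel, indicator, ht, hs]

lemma tailKernel_apply_of_nonpos {t : ℝ} (ht : t ≤ 0) (s : ℝ) : tailKernel f (t, s) = 0 := by
  simp [tailKernel, indicator, ht.not_gt]

lemma tailKernel_apply_eq_indicator_Ioo (t s : ℝ) :
    tailKernel f (t, s) = (Ioo 0 s).indicator (fun _ => f s) t := by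
  simp [tailKernel, indicator, mem_Ioo]

lemma norm_tailKernel (p : ℝ × ℝ) : ‖tailKernel f p‖ = tailKernel (fun s => |f s|) p := by
  simp only [tailKernel, norm_indicator_eq_indicator_norm, Real.norm_eq_abs]

lemma integral_tailKernel_fst (s : ℝ) :
    ∫ t, tailKernel f (t, s) = (Ioi 0).indicator (fun s => s * f s) s := by
  simp only [tailKernel_apply_eq_indicator_Ioo, MeasureTheory.integral_indicator measurableSet_Ioo]
  by_cases hs : 0 < s
  · simp [hs, hs.le]
  · simp [hs]

lemma integral_tailKernel_snd (t : ℝ) :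
    ∫ s, tailKernel f (t, s) = (Ioi 0).indicator (fun t => ∫ s in Ioi t, f s) t := by
  rcases lt_or_ge 0 t with ht | ht
  · simp only [tailKernel_apply_of_pos ht, MeasureTheory.integral_indicator measurableSet_Ioi,
      indicator_of_mem (mem_Ioi.2 ht)]
  · simp [tailKernel_apply_of_nonpos ht, ht.not_gt]

lemma integrable_tailKernel (hf : AEStronglyMeasurable f (volume.restrict (Ioi 0)))
    (hmom : IntegrableOn (fun s => s * |f s|) (Ioi 0)) :
    Integrable (tailKernel f) (volume.prod volume) := by
  have hmeas : AEStronglyMeasurable (tailKernel f) (volume.prod volume) := by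
    have hS : MeasurableSet {p : ℝ × ℝ | 0 < p.1 ∧ p.1 < p.2} :=
      (measurableSet_lt measurable_const measurable_fst).inter
        (measurableSet_lt measurable_fst measurable_snd)
    have hg : AEStronglyMeasurable ((Ioi 0).indicator f) :=
      (aestronglyMeasurable_indicator_iff measurableSet_Ioi).2 hf
    convert (hg.comp_snd (μ := volume)).indicator hS using 1
    ext p
    by_cases hp : 0 < p.1 ∧ p.1 < p.2
    · simp [tailKernel, hp, hp.1.trans hp.2]
    · simp [tailKernel, hp]
  refine (integrable_prod_iff' hmeas).2 ⟨ae_of_all _ fun s => ?_, ?_⟩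
  · simp only [tailKernel_apply_eq_indicator_Ioo]
    exact (integrableOn_const measure_Ioo_lt_top.ne).integrable_indicator measurableSet_Ioo
  · simp only [norm_tailKernel, integral_tailKernel_fst]
    exact hmom.integrable_indicator measurableSet_Ioi

theorem integrableOn_integral_Ioi (hf : AEStronglyMeasurable f (volume.restrict (Ioi 0)))
    (hmom : IntegrableOn (fun s => s * |f s|) (Ioi 0)) :
    IntegrableOn (fun t => ∫ s in Ioi t, f s) (Ioi 0) := by
  have hind := (integrable_tailKernel hf hmom).integral_prod_left
  simp only [integral_tailKernel_snd] at hind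
  exact (integrable_indicator_iff measurableSet_Ioi).1 hind

theorem integral_integral_Ioi_eq_integral_mul
    (hf : AEStronglyMeasurable f (volume.restrict (Ioi 0)))
    (hmom : IntegrableOn (fun s => s * |f s|) (Ioi 0)) :
    ∫ t in Ioi 0, ∫ s in Ioi t, f s = ∫ s in Ioi 0, s * f s := by
  simpa only [integral_tailKernel_snd, integral_tailKernel_fst,
    MeasureTheory.integral_indicator measurableSet_Ioi] using
    integral_integral_swap (f := fun t s => tailKernel f (t, s)) (integrable_tailKernel hf hmom)

end TailIntegral

theorem MeasureTheory.IntegrableOn.continuousOn_primitive_Ioi {E : Type*} [NormedAddCommGroup E]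
    [NormedSpace ℝ E] {f : ℝ → E} {a : ℝ} (hf : IntegrableOn f (Ioi a)) :
    ContinuousOn (fun x => ∫ t in a..x, f t) (Ioi a) := by
  intro x hx
  have hint : IntervalIntegrable f volume a (x + 1) :=
    (intervalIntegrable_iff_integrableOn_Ioc_of_le (by linarith [mem_Ioi.1 hx])).2
      (hf.mono_set Ioc_subset_Ioi_self)
  refine ((continuousOn_primitive_interval' hint left_mem_uIcc).continuousAt ?_).continuousWithinAt
  rw [uIcc_of_le (by linarith [mem_Ioi.1 hx])]
  exact Icc_mem_nhds hx (lt_add_one x)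

theorem eqOn_zero_of_setIntegral_eq_zero {X : Type*} [TopologicalSpace X] [MeasurableSpace X]
    [OpensMeasurableSpace X] {μ : Measure X} [μ.IsOpenPosMeasure] {U : Set X} {f : X → ℝ}
    (hU : IsOpen U) (hf : ContinuousOn f U) (hfi : IntegrableOn f U μ) (hf0 : ∀ x ∈ U, 0 ≤ f x)
    (h : ∫ x in U, f x ∂μ = 0) : EqOn f 0 U :=
  have hae := (setIntegral_eq_zero_iff_of_nonneg_ae
    ((ae_restrict_iff' hU.measurableSet).2 (ae_of_all _ hf0)) hfi).1 h
  Measure.eqOn_open_of_ae_eq hae hU hf continuousOn_const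

theorem key_integral_lemma (h : ℝ → ℝ)
    (hint : IntegrableOn h (Set.Ioi 0))
    (hmom : IntegrableOn (fun s => s * |h s|) (Set.Ioi 0))
    (ha : ∀ r : ℝ, 0 < r → 0 ≤ ∫ s in (0:ℝ)..r, h s)
    (hb : ∫ s in Set.Ioi (0:ℝ), h s = 0)
    (hc : 0 ≤ ∫ s in Set.Ioi (0:ℝ), s * h s) :
    (∫ s in Set.Ioi (0:ℝ), s * h s = 0) ∧
    (∀ r : ℝ, 0 ≤ r → ∫ s in (0:ℝ)..r, h s = 0) := by
  set H : ℝ → ℝ := fun r => ∫ s in (0:ℝ)..r, h s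
  have tail : EqOn (fun t => ∫ s in Ioi t, h s) (-H) (Ioi 0) := fun t ht => by
    have hsplit := integral_Ioi_sub_Ioi hint ht.le
    simp only [Pi.neg_apply, H]
    linarith
  have H_int : IntegrableOn H (Ioi 0) := by
    simpa using ((integrableOn_integral_Ioi hint.aestronglyMeasurable hmom).congr_fun
      tail measurableSet_Ioi).neg
  have H_integral : ∫ t in Ioi 0, H t = -∫ s in Ioi 0, s * h s := by
    rw [← integral_integral_Ioi_eq_integral_mul hint.aestronglyMeasurable hmom,
      setIntegral_congr_fun measurableSet_Ioi tail, Pi.neg_def, MeasureTheory.integral_neg, neg_neg]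
  have H_zero : ∫ t in Ioi 0, H t = 0 :=
    le_antisymm (by linarith) (setIntegral_nonneg measurableSet_Ioi ha)
  have H_eq : EqOn H 0 (Ioi 0) :=
    eqOn_zero_of_setIntegral_eq_zero isOpen_Ioi hint.continuousOn_primitive_Ioi H_int ha H_zero
  refine ⟨by linarith, fun r hr => ?_⟩
  rcases hr.eq_or_lt with rfl | hr
  · exact integral_same
  · exact H_eq hr
end
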